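/- arXiv:0810.1381 — 7 statements merged into one kernel-verified Lean document; each statement's English description precedes it below -/
import Mathlib

section
/- Let p < 3 and let L ∈ L²(ℝ₊, x^p dx). Then there exists a unique H ∈ L²(ℝ₊, x^p dx) such that 4 H(2x) − H(x) = L(x) for a.e. x > 0. -/
/-!
Work in `L²(μₚ)` with `μₚ = xᵖ dx` on `(0, ∞)`. Since the dilation `x ↦ c x` pushes `μₚ` forward
to `c^{-(p+1)} μₚ`, the operator `(D_c f)(x) = f (c x)` is bounded on `L²(μₚ)` with norm at most
`c^{-(p+1)/2}`, and `D_c D_{1/c} = 1`. The equation says `(4 D₂ - 1) H = L`. Here `4 D₂` is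
invertible with inverse `¼ D_{1/2}`, of norm at most `2^{(p+1)/2} / 4`, which is `< 1` exactly
when `p < 3`; so `4 D₂ - 1 = 4 D₂ (1 - ¼ D_{1/2})` is invertible by a Neumann series.
-/

open MeasureTheory Set Filter
open scoped ENNReal

theorem Units.isUnit_sub_one_of_norm_inv_lt_one {R : Type*} [NormedRing R]
    [HasSummableGeomSeries R] (u : Rˣ) (h : ‖(↑u⁻¹ : R)‖ < 1) : IsUnit ((u : R) - 1) := by
  have : (u : R) - 1 = u * (1 - ↑u⁻¹) := by rw [mul_sub, mul_one, Units.mul_inv]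
  rw [this]
  exact u.isUnit.mul (Units.oneSub _ h).isUnit

namespace MeasureTheory

noncomputable def volumeIoiRpow (p : ℝ) : Measure ℝ :=
  (volume.restrict (Ioi 0)).withDensity fun x => ENNReal.ofReal (x ^ p)

variable {p c : ℝ}

theorem volumeIoiRpow_absolutelyContinuous : volumeIoiRpow p ≪ volume.restrict (Ioi 0) :=
  withDensity_absolutelyContinuous _ _

theorem absolutelyContinuous_volumeIoiRpow : volume.restrict (Ioi 0) ≪ volumeIoiRpow p := by
  refine withDensity_absolutelyContinuous' (by fun_prop) ?_
  filter_upwards [ae_restrict_mem measurableSet_Ioi] with x hx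
  exact (ENNReal.ofReal_pos.2 (Real.rpow_pos_of_pos hx p)).ne'

theorem ae_volumeIoiRpow : ae (volumeIoiRpow p) = ae (volume.restrict (Ioi 0)) :=
  le_antisymm volumeIoiRpow_absolutelyContinuous.ae_le absolutelyContinuous_volumeIoiRpow.ae_le

theorem integrable_volumeIoiRpow_iff {g : ℝ → ℝ} :
    Integrable g (volumeIoiRpow p) ↔ IntegrableOn (fun x => g x * x ^ p) (Ioi 0) := by
  rw [volumeIoiRpow, integrable_withDensity_iff_integrable_smul' (by fun_prop)
    (ae_of_all _ fun _ => ENNReal.ofReal_lt_top), IntegrableOn]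
  refine integrable_congr ?_
  filter_upwards [ae_restrict_mem measurableSet_Ioi] with x hx
  rw [ENNReal.toReal_ofReal (Real.rpow_nonneg hx.le p), smul_eq_mul, mul_comm]

theorem memLp_two_volumeIoiRpow_iff {f : ℝ → ℝ} :
    MemLp f 2 (volumeIoiRpow p) ↔
      AEMeasurable f (volume.restrict (Ioi 0)) ∧
        IntegrableOn (fun x => f x ^ 2 * x ^ p) (Ioi 0) := by
  have hmeas : AEStronglyMeasurable f (volumeIoiRpow p) ↔
      AEMeasurable f (volume.restrict (Ioi 0)) := by
    rw [aestronglyMeasurable_iff_aemeasurable]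
    exact ⟨fun h => h.mono_ac absolutelyContinuous_volumeIoiRpow,
      fun h => h.mono_ac volumeIoiRpow_absolutelyContinuous⟩
  refine ⟨fun h => ⟨hmeas.1 h.1, ?_⟩, fun h => ?_⟩
  · rwa [memLp_two_iff_integrable_sq h.1, integrable_volumeIoiRpow_iff] at h
  · rw [memLp_two_iff_integrable_sq (hmeas.2 h.1), integrable_volumeIoiRpow_iff]
    exact h.2

theorem lintegral_comp_mul_left_volumeIoiRpow (hc : 0 < c) {g : ℝ → ℝ≥0∞} (hg : Measurable g) :
    ∫⁻ x, g (c * x) ∂volumeIoiRpow p =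
      ENNReal.ofReal (c ^ (-(p + 1))) * ∫⁻ x, g x ∂volumeIoiRpow p := by
  have hw : Measurable fun x : ℝ => ENNReal.ofReal (x ^ p) := by fun_prop
  rw [volumeIoiRpow, lintegral_withDensity_eq_lintegral_mul _ hw (g := fun x => g (c * x))
    (hg.comp (measurable_const_mul c)), lintegral_withDensity_eq_lintegral_mul _ hw hg]
  have hsubst := lintegral_image_eq_lintegral_abs_deriv_mul (measurableSet_Ioi (a := (0 : ℝ)))
    (fun x _ => (hasDerivAt_const_mul c).hasDerivWithinAt) (mul_right_injective₀ hc.ne').injOn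
    ((fun x : ℝ => ENNReal.ofReal (x ^ p)) * g)
  rw [image_mul_left_Ioi hc, mul_zero] at hsubst
  rw [hsubst, ← lintegral_const_mul _ (by fun_prop)]
  refine setLIntegral_congr_fun measurableSet_Ioi fun x hx => ?_
  simp only [Pi.mul_apply, abs_of_pos hc]
  rw [← mul_assoc, ← mul_assoc, ← ENNReal.ofReal_mul (by positivity),
    ← ENNReal.ofReal_mul (by positivity)]
  congr 2
  rw [Real.mul_rpow hc.le hx.le, Real.rpow_neg hc.le, Real.rpow_add hc, Real.rpow_one]
  field_simp

theorem map_mul_left_volumeIoiRpow (hc : 0 < c) :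
    (volumeIoiRpow p).map (c * ·) = ENNReal.ofReal (c ^ (-(p + 1))) • volumeIoiRpow p := by
  refine Measure.ext_of_lintegral _ fun g hg => ?_
  rw [lintegral_map hg (measurable_const_mul c), lintegral_smul_measure, smul_eq_mul,
    lintegral_comp_mul_left_volumeIoiRpow hc hg]

theorem quasiMeasurePreserving_mul_left_volumeIoiRpow (hc : 0 < c) :
    Measure.QuasiMeasurePreserving (c * ·) (volumeIoiRpow p) (volumeIoiRpow p) := by
  refine ⟨measurable_const_mul c, ?_⟩
  rw [map_mul_left_volumeIoiRpow hc]
  exact Measure.smul_absolutelyContinuous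

variable {E : Type*} [NormedAddCommGroup E] {q : ℝ≥0∞}

theorem eLpNorm_comp_mul_left_volumeIoiRpow (hc : 0 < c) {f : ℝ → E}
    (hf : AEStronglyMeasurable f (volumeIoiRpow p)) :
    eLpNorm (fun x => f (c * x)) q (volumeIoiRpow p) =
      ENNReal.ofReal (c ^ (-(p + 1) / q.toReal)) * eLpNorm f q (volumeIoiRpow p) := by
  have hf' : AEStronglyMeasurable f ((volumeIoiRpow p).map (c * ·)) := by
    rw [map_mul_left_volumeIoiRpow hc]
    exact hf.smul_measure _
  rw [show (fun x => f (c * x)) = f ∘ (c * ·) from rfl,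
    ← eLpNorm_map_measure hf' (measurable_const_mul c).aemeasurable,
    map_mul_left_volumeIoiRpow hc, eLpNorm_smul_measure_of_ne_zero (by positivity), smul_eq_mul,
    one_div, ENNReal.toReal_inv, ENNReal.ofReal_rpow_of_nonneg (by positivity) (by positivity),
    ← Real.rpow_mul hc.le, div_eq_mul_inv]

theorem MemLp.comp_mul_left_volumeIoiRpow (hc : 0 < c) {f : ℝ → E}
    (hf : MemLp f q (volumeIoiRpow p)) : MemLp (fun x => f (c * x)) q (volumeIoiRpow p) := by
  refine MemLp.comp_of_map ?_ (measurable_const_mul c).aemeasurable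
  rw [map_mul_left_volumeIoiRpow hc]
  exact hf.smul_measure ENNReal.ofReal_ne_top

namespace Lp

variable [NormedSpace ℝ E] [Fact (1 ≤ q)]

noncomputable def dilation (p : ℝ) (hc : 0 < c) :
    Lp E q (volumeIoiRpow p) →L[ℝ] Lp E q (volumeIoiRpow p) :=
  LinearMap.mkContinuous
    { toFun f := ⟨f.1.compQuasiMeasurePreserving (c * ·)
          (quasiMeasurePreserving_mul_left_volumeIoiRpow hc), by
        rw [Lp.mem_Lp_iff_memLp]
        exact ((Lp.memLp f).comp_mul_left_volumeIoiRpow hc).ae_eq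
          (AEEqFun.coeFn_compQuasiMeasurePreserving _ _).symm⟩
      map_add' := by rintro ⟨⟨_⟩, _⟩ ⟨⟨_⟩, _⟩; rfl
      map_smul' := by rintro _ ⟨⟨_⟩, _⟩; rfl }
    (c ^ (-(p + 1) / q.toReal)) fun f => by
      simp only [LinearMap.coe_mk, AddHom.coe_mk, Lp.norm_def]
      rw [eLpNorm_congr_ae (AEEqFun.coeFn_compQuasiMeasurePreserving _ _), Function.comp_def,
        eLpNorm_comp_mul_left_volumeIoiRpow hc (Lp.aestronglyMeasurable f), ENNReal.toReal_mul,
        ENNReal.toReal_ofReal (by positivity)]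

theorem coeFn_dilation (hc : 0 < c) (f : Lp E q (volumeIoiRpow p)) :
    dilation p hc f =ᵐ[volumeIoiRpow p] fun x => f (c * x) :=
  AEEqFun.coeFn_compQuasiMeasurePreserving _ (quasiMeasurePreserving_mul_left_volumeIoiRpow hc)

theorem norm_dilation_le (hc : 0 < c) :
    ‖(dilation p hc : Lp E q (volumeIoiRpow p) →L[ℝ] Lp E q (volumeIoiRpow p))‖ ≤
      c ^ (-(p + 1) / q.toReal) :=
  LinearMap.mkContinuous_norm_le _ (by positivity) _

theorem dilation_mul_dilation {a b : ℝ} (ha : 0 < a) (hb : 0 < b) :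
    (dilation p ha * dilation p hb : Lp E q (volumeIoiRpow p) →L[ℝ] Lp E q (volumeIoiRpow p)) =
      dilation p (mul_pos hb ha) := by
  ext1 f
  refine Lp.ext ?_
  filter_upwards [coeFn_dilation ha (dilation p hb f), coeFn_dilation (mul_pos hb ha) f,
    (quasiMeasurePreserving_mul_left_volumeIoiRpow ha).ae (coeFn_dilation hb f)] with x h₁ h₂ h₃
  rw [mul_apply_eq_comp, h₁, h₂, h₃, mul_assoc]

theorem dilation_one :
    (dilation p one_pos : Lp E q (volumeIoiRpow p) →L[ℝ] Lp E q (volumeIoiRpow p)) = 1 := by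
  ext1 f
  refine Lp.ext ?_
  filter_upwards [coeFn_dilation one_pos f] with x hx
  rw [hx, one_mul, one_apply_eq_self]

theorem dilation_mul_dilation_inv (hc : 0 < c) :
    (dilation p hc * dilation p (inv_pos.2 hc) :
      Lp E q (volumeIoiRpow p) →L[ℝ] Lp E q (volumeIoiRpow p)) = 1 := by
  rw [dilation_mul_dilation, ← dilation_one]
  congr 1
  exact inv_mul_cancel₀ hc.ne'

theorem dilation_inv_mul_dilation (hc : 0 < c) :
    (dilation p (inv_pos.2 hc) * dilation p hc :
      Lp E q (volumeIoiRpow p) →L[ℝ] Lp E q (volumeIoiRpow p)) = 1 := by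
  rw [dilation_mul_dilation, ← dilation_one]
  congr 1
  exact mul_inv_cancel₀ hc.ne'

theorem bijective_smul_dilation_sub_one [CompleteSpace E] {a : ℝ} (hc : 0 < c)
    (ha : c ^ ((p + 1) / q.toReal) < |a|) :
    Function.Bijective
      ⇑(a • dilation p hc - 1 : Lp E q (volumeIoiRpow p) →L[ℝ] Lp E q (volumeIoiRpow p)) := by
  have ha₀ : a ≠ 0 := abs_pos.1 ((Real.rpow_pos_of_pos hc _).trans ha)
  let u : (Lp E q (volumeIoiRpow p) →L[ℝ] Lp E q (volumeIoiRpow p))ˣ :=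
    { val := a • dilation p hc
      inv := a⁻¹ • dilation p (inv_pos.2 hc)
      val_inv := by rw [smul_mul_smul, mul_inv_cancel₀ ha₀, one_smul, dilation_mul_dilation_inv]
      inv_val := by rw [smul_mul_smul, inv_mul_cancel₀ ha₀, one_smul, dilation_inv_mul_dilation] }
  have hu : ‖(↑u⁻¹ : Lp E q (volumeIoiRpow p) →L[ℝ] Lp E q (volumeIoiRpow p))‖ < 1 :=
    calc ‖a⁻¹ • (dilation p (inv_pos.2 hc) :
          Lp E q (volumeIoiRpow p) →L[ℝ] Lp E q (volumeIoiRpow p))‖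
        ≤ |a|⁻¹ * c⁻¹ ^ (-(p + 1) / q.toReal) := by
          rw [norm_smul, Real.norm_eq_abs, abs_inv]
          gcongr
          exact norm_dilation_le _
      _ = |a|⁻¹ * c ^ ((p + 1) / q.toReal) := by
          rw [Real.inv_rpow hc.le, ← Real.rpow_neg hc.le, neg_div, neg_neg]
      _ < 1 := (inv_mul_lt_one₀ (abs_pos.2 ha₀)).2 ha
  obtain ⟨v, hv⟩ := u.isUnit_sub_one_of_norm_inv_lt_one hu
  rw [← hv]
  exact (ContinuousLinearEquiv.unitsEquiv ℝ _ v).bijective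

theorem smul_dilation_sub_one_toLp_eq_toLp_iff {a : ℝ} (hc : 0 < c) {f g : ℝ → E}
    (hf : MemLp f q (volumeIoiRpow p)) (hg : MemLp g q (volumeIoiRpow p)) :
    (a • dilation p hc - 1 : Lp E q (volumeIoiRpow p) →L[ℝ] Lp E q (volumeIoiRpow p))
        (hf.toLp f) = hg.toLp g ↔
      ∀ᵐ x ∂volumeIoiRpow p, a • f (c * x) - f x = g x := by
  have hlhs : ⇑((a • dilation p hc - 1 : Lp E q (volumeIoiRpow p) →L[ℝ] Lp E q (volumeIoiRpow p))
      (hf.toLp f)) =ᵐ[volumeIoiRpow p] fun x => a • f (c * x) - f x := by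
    rw [sub_apply, smul_apply, one_apply_eq_self]
    filter_upwards [Lp.coeFn_sub (a • dilation p hc (hf.toLp f)) (hf.toLp f),
      Lp.coeFn_smul a (dilation p hc (hf.toLp f)), coeFn_dilation hc (hf.toLp f),
      (quasiMeasurePreserving_mul_left_volumeIoiRpow hc).ae hf.coeFn_toLp, hf.coeFn_toLp]
      with x h₁ h₂ h₃ h₄ h₅
    rw [h₁, Pi.sub_apply, h₂, Pi.smul_apply, h₃, h₄, h₅]
  rw [Lp.ext_iff, hlhs.congr_left, hg.coeFn_toLp.congr_right]
  rfl

end Lp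

end MeasureTheory

/-- For `p < 3` and `L ∈ L²(ℝ₊, xᵖ dx)`, there is a unique `H ∈ L²(ℝ₊, xᵖ dx)` with
`4 H(2x) − H(x) = L(x)` for a.e. `x > 0`. -/
theorem unique_solution_dilation_eq_of_lt_three (p : ℝ) (hp : p < 3) (L : ℝ → ℝ)
    (hLmeas : AEMeasurable L (volume.restrict (Ioi 0)))
    (hL : IntegrableOn (fun x => (L x) ^ 2 * x ^ p) (Ioi 0)) :
    ∃ H : ℝ → ℝ, (AEMeasurable H (volume.restrict (Ioi 0)) ∧
      IntegrableOn (fun x => (H x) ^ 2 * x ^ p) (Ioi 0) ∧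
      (∀ᵐ x ∂(volume.restrict (Ioi (0 : ℝ))), 4 * H (2 * x) - H x = L x)) ∧
      (∀ H' : ℝ → ℝ, AEMeasurable H' (volume.restrict (Ioi 0)) →
        IntegrableOn (fun x => (H' x) ^ 2 * x ^ p) (Ioi 0) →
        (∀ᵐ x ∂(volume.restrict (Ioi (0 : ℝ))), 4 * H' (2 * x) - H' x = L x) →
        H' =ᵐ[volume.restrict (Ioi (0 : ℝ))] H) := by
  have hL₂ : MemLp L 2 (volumeIoiRpow p) := memLp_two_volumeIoiRpow_iff.2 ⟨hLmeas, hL⟩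
  let A : Lp ℝ 2 (volumeIoiRpow p) →L[ℝ] Lp ℝ 2 (volumeIoiRpow p) :=
    (4 : ℝ) • Lp.dilation p two_pos - 1
  have hA : Function.Bijective A := Lp.bijective_smul_dilation_sub_one two_pos (by
    rw [ENNReal.toReal_ofNat, abs_of_pos four_pos, show (4 : ℝ) = 2 ^ (2 : ℝ) by norm_num]
    exact Real.rpow_lt_rpow_of_exponent_lt one_lt_two (by linarith))
  have hsolves {G : ℝ → ℝ} (hG : MemLp G 2 (volumeIoiRpow p)) :
      A (hG.toLp G) = hL₂.toLp L ↔ ∀ᵐ x ∂volume.restrict (Ioi 0), 4 * G (2 * x) - G x = L x := by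
    rw [Lp.smul_dilation_sub_one_toLp_eq_toLp_iff, ae_volumeIoiRpow]
    simp only [smul_eq_mul]
  obtain ⟨H, hH⟩ := hA.2 (hL₂.toLp L)
  have hH₂ : MemLp H 2 (volumeIoiRpow p) := Lp.memLp H
  refine ⟨H, ⟨(memLp_two_volumeIoiRpow_iff.1 hH₂).1, (memLp_two_volumeIoiRpow_iff.1 hH₂).2,
    (hsolves hH₂).1 (by rwa [Lp.toLp_coeFn])⟩, fun H' hH'm hH'int hH'eq => ?_⟩
  have hH'₂ : MemLp H' 2 (volumeIoiRpow p) := memLp_two_volumeIoiRpow_iff.2 ⟨hH'm, hH'int⟩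
  have hH'H : hH'₂.toLp H' = H := hA.1 (((hsolves hH'₂).2 hH'eq).trans hH.symm)
  rw [← ae_volumeIoiRpow (p := p)]
  exact hH'₂.coeFn_toLp.symm.trans (hH'H ▸ EventuallyEq.rfl)
end

section
/- Let p < 3 and let L ∈ L²(ℝ₊, x^p dx). Then the series H⁽¹⁾(x) = Σ_{n=1}^∞ 2^{-2n} L(2^{-n} x) converges in L²(ℝ₊, x^p dx), the function H⁽¹⁾ belongs to L²(ℝ₊, x^p dx), and it satisfies 4 H⁽¹⁾(2x) − H⁽¹⁾(x) = L(x) for a.e. x > 0; that is, H⁽¹⁾ is the unique solution of this equation in L²(ℝ₊, x^p dx). -/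
/-!
Work in `L²(μ)` for `μ = xᵖ dx` on `(0, ∞)`. The substitution `y = a x` shows that `u ↦ u(a ·)`
multiplies the `L²(μ)` norm by `a^{-(p+1)/2}`, so the `n`-th term `2^{-2n} L(2^{-n} x)` has norm
`2^{n(p-3)/2} ‖L‖`. For `p < 3` the series therefore converges absolutely in `L²(μ)`, hence almost
everywhere, and its pointwise sum `H⁽¹⁾` is its `L²` sum. Shifting the index gives
`4 H⁽¹⁾(2x) = L(x) + H⁽¹⁾(x)` wherever the series converges. The difference `D` of two solutions
satisfies `D = 4 D(2 ·)`, whose norm is `2^{(3-p)/2} ‖D‖`, so `‖D‖ = 0`.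
-/

open MeasureTheory Set Filter

/-- `H⁽¹⁾(x) = Σ_{n=1}^∞ 2^{−2n} L(2^{−n} x)` (indexed here by `n+1`, `n : ℕ`). -/
noncomputable def Hone (L : ℝ → ℝ) (x : ℝ) : ℝ :=
  ∑' n : ℕ, (2 : ℝ) ^ (-(2 : ℝ) * ((n : ℝ) + 1)) * L ((2 : ℝ) ^ (-((n : ℝ) + 1)) * x)

open scoped ENNReal Topology

namespace MeasureTheory

variable {α E : Type*} [MeasurableSpace α] {μ : Measure α} [NormedAddCommGroup E]
  [CompleteSpace E] {r : ℝ≥0∞} [Fact (1 ≤ r)] {f : ℕ → α → E}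

theorem coeFn_tsum_toLp (hf : ∀ n, MemLp (f n) r μ)
    (hsum : ∑' n, eLpNorm (f n) r μ ≠ ∞) :
    ⇑(∑' n, (hf n).toLp (f n)) =ᵐ[μ] fun x => ∑' n, f n x := by
  have hF : ∑' n, ‖(hf n).toLp (f n)‖ₑ ≠ ∞ := by simpa only [Lp.enorm_toLp] using hsum
  filter_upwards [Lp.coeFn_tsum hF, ae_all_iff.2 fun n => (hf n).coeFn_toLp] with x hx hfx
  rw [hx]
  exact tsum_congr hfx

theorem memLp_tsum_of_tsum_eLpNorm_ne_top (hf : ∀ n, MemLp (f n) r μ)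
    (hsum : ∑' n, eLpNorm (f n) r μ ≠ ∞) : MemLp (fun x => ∑' n, f n x) r μ :=
  (Lp.memLp _).ae_eq (coeFn_tsum_toLp hf hsum)

theorem tendsto_eLpNorm_sum_range_sub_tsum (hf : ∀ n, MemLp (f n) r μ)
    (hsum : ∑' n, eLpNorm (f n) r μ ≠ ∞) :
    Tendsto (fun k => eLpNorm (fun x => ∑ n ∈ Finset.range k, f n x - ∑' n, f n x) r μ)
      atTop (𝓝 0) := by
  have hF : Summable fun n => (hf n).toLp (f n) :=
    .of_enorm (by simpa only [Lp.enorm_toLp] using hsum)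
  refine ((Lp.tendsto_Lp_iff_tendsto_eLpNorm' _ _).1 hF.tendsto_sum_tsum_nat).congr fun k => ?_
  refine eLpNorm_congr_ae ?_
  filter_upwards [Lp.coeFn_fun_finsetSum (Finset.range k) fun n => (hf n).toLp (f n),
    coeFn_tsum_toLp hf hsum, ae_all_iff.2 fun n => (hf n).coeFn_toLp] with x hsum hx hfx
  simp only [Pi.sub_apply, hsum, hx, hfx]

end MeasureTheory

noncomputable def rpowMeasure (p : ℝ) : Measure ℝ :=
  (volume.restrict (Ioi 0)).withDensity fun x => ENNReal.ofReal (x ^ p)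

section rpowMeasure

variable {p a : ℝ}

theorem rpowMeasure_absolutelyContinuous (p : ℝ) : rpowMeasure p ≪ volume.restrict (Ioi 0) :=
  withDensity_absolutelyContinuous _ _

theorem absolutelyContinuous_rpowMeasure (p : ℝ) : volume.restrict (Ioi 0) ≪ rpowMeasure p := by
  refine withDensity_absolutelyContinuous' (by fun_prop) ?_
  filter_upwards [ae_restrict_mem measurableSet_Ioi] with x hx
  simpa using Real.rpow_pos_of_pos hx p

theorem map_const_mul_volume_restrict_Ioi (ha : 0 < a) :
    (volume.restrict (Ioi 0)).map (a * ·) = ENNReal.ofReal a⁻¹ • volume.restrict (Ioi 0) := by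
  have hpre : (a * ·) ⁻¹' Ioi 0 = Ioi (0 : ℝ) := by
    ext x
    simp [mul_pos_iff_of_pos_left ha]
  rw [← hpre, ← Measure.restrict_map (measurable_const_mul a) measurableSet_Ioi,
    Real.map_volume_mul_left ha.ne', Measure.restrict_smul, abs_of_pos (inv_pos.2 ha), hpre]

theorem map_const_mul_rpowMeasure (p : ℝ) (ha : 0 < a) :
    (rpowMeasure p).map (a * ·) = ENNReal.ofReal (a ^ (-(p + 1))) • rpowMeasure p := by
  have hmul : Measurable (a * · : ℝ → ℝ) := measurable_const_mul a
  ext s hs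
  rw [Measure.map_apply hmul hs, Measure.smul_apply, smul_eq_mul, rpowMeasure,
    withDensity_apply _ (hmul hs), withDensity_apply _ hs, ← lintegral_indicator (hmul hs),
    ← lintegral_indicator hs]
  calc ∫⁻ x, ((a * ·) ⁻¹' s).indicator (fun x => ENNReal.ofReal (x ^ p)) x
        ∂volume.restrict (Ioi 0)
      = ∫⁻ x, ENNReal.ofReal (a ^ (-p)) * s.indicator (fun y => ENNReal.ofReal (y ^ p)) (a * x)
        ∂volume.restrict (Ioi 0) := by
        refine lintegral_congr_ae ?_
        filter_upwards [ae_restrict_mem measurableSet_Ioi] with x hx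
        by_cases hxs : a * x ∈ s
        · simp only [indicator_of_mem hxs, indicator_of_mem (show x ∈ (a * ·) ⁻¹' s from hxs)]
          rw [← ENNReal.ofReal_mul (by positivity), Real.mul_rpow ha.le (le_of_lt hx),
            ← mul_assoc, ← Real.rpow_add ha, neg_add_cancel, Real.rpow_zero, one_mul]
        · simp [indicator_of_notMem hxs, indicator_of_notMem (show x ∉ (a * ·) ⁻¹' s from hxs)]
    _ = ENNReal.ofReal (a ^ (-(p + 1))) *
          ∫⁻ y, s.indicator (fun y => ENNReal.ofReal (y ^ p)) y ∂volume.restrict (Ioi 0) := by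
        rw [lintegral_const_mul' _ _ ENNReal.ofReal_ne_top, ← lintegral_map
          ((Measurable.ennreal_ofReal (by fun_prop)).indicator hs) hmul,
          map_const_mul_volume_restrict_Ioi ha, lintegral_smul_measure, smul_eq_mul, ← mul_assoc,
          ← ENNReal.ofReal_mul (by positivity), ← Real.rpow_neg_one, ← Real.rpow_add ha]
        ring_nf

theorem memLp_two_rpowMeasure_iff {g : ℝ → ℝ}
    (hg : AEStronglyMeasurable g (volume.restrict (Ioi 0))) :
    MemLp g 2 (rpowMeasure p) ↔ IntegrableOn (fun x => g x ^ 2 * x ^ p) (Ioi 0) := by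
  rw [memLp_two_iff_integrable_sq (hg.mono_ac (rpowMeasure_absolutelyContinuous p)), rpowMeasure,
    integrable_withDensity_iff (by fun_prop) (ae_of_all _ fun _ => ENNReal.ofReal_lt_top)]
  refine integrable_congr ?_
  filter_upwards [ae_restrict_mem measurableSet_Ioi] with x hx
  rw [ENNReal.toReal_ofReal (Real.rpow_pos_of_pos hx p).le]

theorem setIntegral_sq_mul_rpow {g : ℝ → ℝ} (hg : AEStronglyMeasurable g (rpowMeasure p)) :
    ∫ x in Ioi 0, g x ^ 2 * x ^ p = (eLpNorm g 2 (rpowMeasure p) ^ 2).toReal := by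
  have hweight : ∫ x in Ioi 0, g x ^ 2 * x ^ p = ∫ x, g x ^ 2 ∂rpowMeasure p := by
    rw [rpowMeasure, integral_withDensity_eq_integral_toReal_smul (by fun_prop)
      (ae_of_all _ fun _ => ENNReal.ofReal_lt_top)]
    refine setIntegral_congr_fun measurableSet_Ioi fun x hx => ?_
    rw [ENNReal.toReal_ofReal (Real.rpow_pos_of_pos hx p).le, smul_eq_mul, mul_comm]
  rw [hweight, integral_eq_lintegral_of_nonneg_ae (ae_of_all _ fun x => sq_nonneg (g x))
    (hg.pow 2), eLpNorm_eq_lintegral_rpow_enorm_toReal two_ne_zero ENNReal.ofNat_ne_top,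
    ENNReal.toReal_ofNat, ← ENNReal.rpow_natCast, ← ENNReal.rpow_mul, Nat.cast_ofNat,
    one_div_mul_cancel two_ne_zero, ENNReal.rpow_one]
  congr 1
  refine lintegral_congr fun x => ?_
  rw [ENNReal.rpow_two, ← sq_abs, ENNReal.ofReal_pow (abs_nonneg _), ← Real.enorm_eq_ofReal_abs]

theorem tendsto_setIntegral_sq_mul_rpow {ι : Type*} {l : Filter ι} {g : ι → ℝ → ℝ}
    (hg : ∀ k, AEStronglyMeasurable (g k) (rpowMeasure p))
    (h : Tendsto (fun k => eLpNorm (g k) 2 (rpowMeasure p)) l (𝓝 0)) :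
    Tendsto (fun k => ∫ x in Ioi 0, g k x ^ 2 * x ^ p) l (𝓝 0) := by
  have hsq := ENNReal.Tendsto.pow (n := 2) h
  rw [zero_pow two_ne_zero] at hsq
  simpa only [setIntegral_sq_mul_rpow (hg _), ENNReal.toReal_zero, Function.comp_def] using
    (ENNReal.tendsto_toReal ENNReal.zero_ne_top).comp hsq

variable {E : Type*} [NormedAddCommGroup E] {r : ℝ≥0∞} {g : ℝ → E}

theorem eLpNorm_comp_const_mul_rpowMeasure (hg : AEStronglyMeasurable g (rpowMeasure p))
    (ha : 0 < a) (hr : r ≠ ∞) :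
    eLpNorm (fun x => g (a * x)) r (rpowMeasure p) =
      ENNReal.ofReal (a ^ (-(p + 1))) ^ (1 / r).toReal * eLpNorm g r (rpowMeasure p) := by
  have hg' : AEStronglyMeasurable g ((rpowMeasure p).map (a * ·)) := by
    rw [map_const_mul_rpowMeasure p ha]; exact hg.smul_measure _
  rw [← smul_eq_mul, ← eLpNorm_smul_measure_of_ne_top hr, ← map_const_mul_rpowMeasure p ha,
    eLpNorm_map_measure hg' (measurable_const_mul a).aemeasurable]
  rfl

theorem MeasureTheory.MemLp.comp_const_mul_rpowMeasure (hg : MemLp g r (rpowMeasure p))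
    (ha : 0 < a) :
    MemLp (fun x => g (a * x)) r (rpowMeasure p) := by
  refine MemLp.comp_of_map ?_ (measurable_const_mul a).aemeasurable
  rw [map_const_mul_rpowMeasure p ha]
  exact hg.smul_measure ENNReal.ofReal_ne_top

end rpowMeasure

noncomputable def dilationTerm (L : ℝ → ℝ) (t x : ℝ) : ℝ :=
  (2 : ℝ) ^ (-(2 : ℝ) * t) * L ((2 : ℝ) ^ (-t) * x)

section dilationTerm

variable {p : ℝ} {L : ℝ → ℝ}

theorem Hone_eq_tsum_dilationTerm (L : ℝ → ℝ) (x : ℝ) :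
    Hone L x = ∑' n : ℕ, dilationTerm L (n + 1) x :=
  rfl

theorem dilationTerm_zero (L : ℝ → ℝ) (x : ℝ) : dilationTerm L 0 x = L x := by
  simp [dilationTerm]

theorem dilationTerm_neg_one (L : ℝ → ℝ) (x : ℝ) : dilationTerm L (-1) x = 4 * L (2 * x) := by
  norm_num [dilationTerm]

theorem four_mul_dilationTerm_two_mul (L : ℝ → ℝ) (t x : ℝ) :
    4 * dilationTerm L (t + 1) (2 * x) = dilationTerm L t x := by
  have h4 : (4 : ℝ) = 2 ^ (2 : ℝ) := by norm_num
  simp only [dilationTerm]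
  rw [h4, ← mul_assoc, ← Real.rpow_add two_pos, ← mul_assoc, ← Real.rpow_add_one two_ne_zero]
  ring_nf

theorem MeasureTheory.MemLp.dilationTerm (hL : MemLp L 2 (rpowMeasure p)) (t : ℝ) :
    MemLp (dilationTerm L t) 2 (rpowMeasure p) :=
  (hL.comp_const_mul_rpowMeasure (Real.rpow_pos_of_pos two_pos _)).const_mul _

theorem eLpNorm_dilationTerm (hL : AEStronglyMeasurable L (rpowMeasure p)) (t : ℝ) :
    eLpNorm (dilationTerm L t) 2 (rpowMeasure p) =
      ENNReal.ofReal (2 ^ ((p - 3) / 2 * t)) * eLpNorm L 2 (rpowMeasure p) := by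
  have h2 : ∀ s : ℝ, (0 : ℝ) ≤ 2 ^ s := fun s => (Real.rpow_pos_of_pos two_pos s).le
  rw [show dilationTerm L t = (2 : ℝ) ^ (-(2 : ℝ) * t) • fun x => L ((2 : ℝ) ^ (-t) * x) from rfl,
    eLpNorm_const_smul,
    eLpNorm_comp_const_mul_rpowMeasure hL (Real.rpow_pos_of_pos two_pos _) ENNReal.ofNat_ne_top,
    ← mul_assoc]
  congr 1
  rw [Real.enorm_eq_ofReal (h2 _), ← Real.rpow_mul zero_le_two,
    ENNReal.ofReal_rpow_of_nonneg (h2 _) ENNReal.toReal_nonneg, ← ENNReal.ofReal_mul (h2 _),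
    ← Real.rpow_mul zero_le_two, ← Real.rpow_add two_pos]
  congr 2
  simp only [one_div, ENNReal.toReal_inv, ENNReal.toReal_ofNat]
  ring

theorem tsum_eLpNorm_dilationTerm_ne_top (hp : p < 3) (hL : MemLp L 2 (rpowMeasure p)) :
    ∑' n : ℕ, eLpNorm (dilationTerm L (n + 1)) 2 (rpowMeasure p) ≠ ∞ := by
  set q : ℝ := 2 ^ ((p - 3) / 2)
  have hq : ENNReal.ofReal q < 1 := ENNReal.ofReal_lt_one.2 <|
    Real.rpow_lt_one_of_one_lt_of_neg one_lt_two (by linarith)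
  have hterm : ∀ n : ℕ, eLpNorm (dilationTerm L (n + 1)) 2 (rpowMeasure p) =
      ENNReal.ofReal q ^ (n + 1) * eLpNorm L 2 (rpowMeasure p) := fun n => by
    rw [eLpNorm_dilationTerm hL.1, Real.rpow_mul zero_le_two, ← ENNReal.ofReal_pow
      (Real.rpow_pos_of_pos two_pos _).le, ← Real.rpow_natCast]
    push_cast
    rfl
  rw [tsum_congr hterm, ENNReal.tsum_mul_right, ENNReal.tsum_geometric_add_one]
  exact ENNReal.mul_ne_top (ENNReal.mul_ne_top ENNReal.ofReal_ne_top
    (ENNReal.inv_ne_top.2 (tsub_pos_of_lt hq).ne')) hL.eLpNorm_ne_top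

theorem ae_eq_zero_of_dilationTerm_neg_one_ae_eq (hp : p < 3) (hD : MemLp L 2 (rpowMeasure p))
    (h : dilationTerm L (-1) =ᵐ[rpowMeasure p] L) : L =ᵐ[rpowMeasure p] 0 := by
  have hscale := eLpNorm_dilationTerm hD.1 (-1)
  rw [eLpNorm_congr_ae h] at hscale
  have hc : 1 < ENNReal.ofReal (2 ^ ((p - 3) / 2 * -1)) :=
    ENNReal.one_lt_ofReal.2 (Real.one_lt_rpow one_lt_two (by linarith))
  refine (eLpNorm_eq_zero_iff hD.1 two_ne_zero).1 (by_contra fun h0 => hc.ne' ?_)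
  exact (ENNReal.mul_eq_left h0 hD.eLpNorm_ne_top).1 (by rw [mul_comm]; exact hscale.symm)

theorem four_mul_Hone_two_mul_sub {x : ℝ} (hx : Summable fun n : ℕ => dilationTerm L (n + 1) x) :
    4 * Hone L (2 * x) - Hone L x = L x := by
  have hshift : 4 * Hone L (2 * x) = ∑' n : ℕ, dilationTerm L n x := by
    rw [Hone_eq_tsum_dilationTerm, ← tsum_mul_left]
    exact tsum_congr fun n => four_mul_dilationTerm_two_mul L n x
  have hsum : Summable fun n : ℕ => dilationTerm L n x :=
    (summable_nat_add_iff 1).1 (by exact_mod_cast hx)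
  rw [hshift, hsum.tsum_eq_zero_add, Hone_eq_tsum_dilationTerm]
  push_cast
  rw [dilationTerm_zero]
  ring

end dilationTerm

/-- For `p < 3` and `L ∈ L²(ℝ₊, xᵖ dx)`, the series defining `H⁽¹⁾` converges in
`L²(ℝ₊, xᵖ dx)`, `H⁽¹⁾` belongs to that space, and it is the unique solution there of
`4 H(2x) − H(x) = L(x)` a.e. on `(0,∞)`. -/
theorem Hone_solves_dilation_eq (p : ℝ) (hp : p < 3) (L : ℝ → ℝ)
    (hLmeas : AEMeasurable L (volume.restrict (Ioi 0)))
    (hL : IntegrableOn (fun x => (L x) ^ 2 * x ^ p) (Ioi 0)) :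
    Tendsto (fun k : ℕ => ∫ x in Ioi (0 : ℝ),
        ((∑ n ∈ Finset.range k,
          (2 : ℝ) ^ (-(2 : ℝ) * ((n : ℝ) + 1)) * L ((2 : ℝ) ^ (-((n : ℝ) + 1)) * x))
          - Hone L x) ^ 2 * x ^ p) atTop (nhds 0) ∧
    IntegrableOn (fun x => (Hone L x) ^ 2 * x ^ p) (Ioi 0) ∧
    (∀ᵐ x ∂(volume.restrict (Ioi (0 : ℝ))), 4 * Hone L (2 * x) - Hone L x = L x) ∧
    (∀ H' : ℝ → ℝ, AEMeasurable H' (volume.restrict (Ioi 0)) →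
      IntegrableOn (fun x => (H' x) ^ 2 * x ^ p) (Ioi 0) →
      (∀ᵐ x ∂(volume.restrict (Ioi (0 : ℝ))), 4 * H' (2 * x) - H' x = L x) →
      H' =ᵐ[volume.restrict (Ioi (0 : ℝ))] Hone L) := by
  have hL2 : MemLp L 2 (rpowMeasure p) :=
    (memLp_two_rpowMeasure_iff hLmeas.aestronglyMeasurable).2 hL
  have hterm (n : ℕ) : MemLp (dilationTerm L (n + 1)) 2 (rpowMeasure p) := hL2.dilationTerm _
  have hsum := tsum_eLpNorm_dilationTerm_ne_top hp hL2
  have hH : MemLp (Hone L) 2 (rpowMeasure p) := memLp_tsum_of_tsum_eLpNorm_ne_top hterm hsum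
  have heq : ∀ᵐ x ∂(volume.restrict (Ioi (0 : ℝ))), 4 * Hone L (2 * x) - Hone L x = L x :=
    (absolutelyContinuous_rpowMeasure p).ae_le <|
      (summable_norm_of_tsum_eLpNorm_ne_top one_le_two (fun n => (hterm n).1) hsum).mono
        fun x hx => four_mul_Hone_two_mul_sub hx.of_norm
  refine ⟨?_, (memLp_two_rpowMeasure_iff (hH.1.mono_ac (absolutelyContinuous_rpowMeasure p))).1 hH,
    heq, fun H' hH'meas hH' hH'eq => ?_⟩
  · have hpartial (k : ℕ) : MemLp
        (fun x => ∑ n ∈ Finset.range k, dilationTerm L (n + 1) x - Hone L x) 2 (rpowMeasure p) :=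
      (memLp_finsetSum (Finset.range k) fun n _ => hterm n).sub hH
    exact tendsto_setIntegral_sq_mul_rpow (fun k => (hpartial k).1)
      (tendsto_eLpNorm_sum_range_sub_tsum hterm hsum)
  · have hD : MemLp (H' - Hone L) 2 (rpowMeasure p) :=
      ((memLp_two_rpowMeasure_iff hH'meas.aestronglyMeasurable).2 hH').sub hH
    have hDeq : dilationTerm (H' - Hone L) (-1) =ᵐ[rpowMeasure p] H' - Hone L := by
      filter_upwards [(rpowMeasure_absolutelyContinuous p).ae_le hH'eq,
        (rpowMeasure_absolutelyContinuous p).ae_le heq] with x hx hHx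
      rw [dilationTerm_neg_one, Pi.sub_apply, Pi.sub_apply]
      linarith
    filter_upwards [(absolutelyContinuous_rpowMeasure p).ae_le
      (ae_eq_zero_of_dilationTerm_neg_one_ae_eq hp hD hDeq)] with x hx
    exact sub_eq_zero.1 hx
end

section
/- Let N ∈ L²(ℝ₊) with N(x) > 0 for a.e. x > 0, and let L ∈ L²(ℝ₊). Then there exists a unique function B with B·N ∈ L²(ℝ₊) (i.e., B ∈ L²(ℝ₊, N² dx)) such that 4 B(2x) N(2x) − B(x) N(x) = L(x) for a.e. x > 0. -/
/-!
Writing `G = B·N`, the equation becomes `4 G(2x) - G(x) = L(x)`, i.e. `G` is a fixed point of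
`G ↦ (G(·/2) + L(·/2))/4` on `L²(0, ∞)`. The dilation `G ↦ G(·/2)` multiplies the `L²` norm by
`√2`, so this map is a contraction with constant `√2/4`, and the Banach fixed point theorem gives
a unique `G ∈ L²`. Since `N > 0` a.e., `B = G/N` is then determined a.e.
-/

open MeasureTheory Set Filter Function
open scoped ENNReal NNReal

noncomputable section

local notation "μ₀" => volume.restrict (Ioi (0 : ℝ))

variable {E : Type*} [NormedAddCommGroup E] {p : ℝ≥0∞} {c : ℝ}

theorem map_const_mul_volume_restrict_Ioi_s7 (hc : 0 < c) :
    (μ₀).map (c * ·) = ENNReal.ofReal c⁻¹ • μ₀ := by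
  have hf : MeasurableEmbedding (c * ·) := (Homeomorph.mulLeft₀ c hc.ne').measurableEmbedding
  conv_lhs => rw [← zero_div c, ← preimage_const_mul_Ioi₀ 0 hc, ← hf.restrict_map]
  rw [Real.map_volume_mul_left hc.ne', abs_of_pos (inv_pos.2 hc), Measure.restrict_smul]

theorem quasiMeasurePreserving_const_mul_Ioi (hc : 0 < c) :
    Measure.QuasiMeasurePreserving (c * ·) μ₀ μ₀ :=
  ⟨measurable_const_mul c, by
    rw [map_const_mul_volume_restrict_Ioi_s7 hc]; exact Measure.smul_absolutelyContinuous⟩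

theorem ae_comp_const_mul_Ioi_iff (hc : 0 < c) {P : ℝ → Prop} :
    (∀ᵐ x ∂μ₀, P (c * x)) ↔ ∀ᵐ x ∂μ₀, P x :=
  ⟨fun h => by
    simpa only [mul_inv_cancel_left₀ hc.ne'] using
      (quasiMeasurePreserving_const_mul_Ioi (inv_pos.2 hc)).ae h,
    (quasiMeasurePreserving_const_mul_Ioi hc).ae⟩

theorem eLpNorm_comp_const_mul_Ioi (g : ℝ → E) (p : ℝ≥0∞) (hc : 0 < c) :
    eLpNorm (fun x => g (c * x)) p μ₀ = ENNReal.ofReal c⁻¹ ^ (1 / p).toReal * eLpNorm g p μ₀ := by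
  have hf : MeasurableEmbedding (c * ·) := (Homeomorph.mulLeft₀ c hc.ne').measurableEmbedding
  rw [← smul_eq_mul, ← eLpNorm_smul_measure_of_ne_zero (by simpa using hc),
    ← map_const_mul_volume_restrict_Ioi_s7 hc, hf.eLpNorm_map_measure]
  rfl

theorem MeasureTheory.MemLp.comp_const_mul_Ioi {g : ℝ → E} (hg : MemLp g p μ₀) (hc : 0 < c) :
    MemLp (fun x => g (c * x)) p μ₀ :=
  ⟨hg.1.comp_quasiMeasurePreserving (quasiMeasurePreserving_const_mul_Ioi hc), by
    rw [eLpNorm_comp_const_mul_Ioi g p hc]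
    exact ENNReal.mul_lt_top (by simp [ENNReal.rpow_lt_top_of_nonneg]) hg.2⟩

def dilateLp (hc : 0 < c) (G : Lp E p μ₀) : Lp E p μ₀ :=
  ((Lp.memLp G).comp_const_mul_Ioi hc).toLp _

theorem coeFn_dilateLp (hc : 0 < c) (G : Lp E p μ₀) :
    dilateLp hc G =ᵐ[μ₀] fun x => G (c * x) :=
  MemLp.coeFn_toLp _

theorem edist_dilateLp (hc : 0 < c) (G H : Lp E p μ₀) :
    edist (dilateLp hc G) (dilateLp hc H) = ENNReal.ofReal c⁻¹ ^ (1 / p).toReal * edist G H := by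
  rw [Lp.edist_def, Lp.edist_def, ← eLpNorm_comp_const_mul_Ioi _ p hc]
  refine eLpNorm_congr_ae ?_
  filter_upwards [coeFn_dilateLp hc G, coeFn_dilateLp hc H] with x hG hH
  simp [hG, hH]

def divisionEqMap (L G : Lp ℝ 2 μ₀) : Lp ℝ 2 μ₀ :=
  (4 : ℝ)⁻¹ • (dilateLp (inv_pos.2 two_pos) G + dilateLp (inv_pos.2 two_pos) L)

theorem contractingWith_divisionEqMap (L : Lp ℝ 2 μ₀) :
    ContractingWith 2⁻¹ (divisionEqMap L) := by
  refine ⟨by norm_num, fun G H => ?_⟩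
  have hsqrt : (2 : ℝ≥0∞) ^ (2⁻¹ : ℝ) ≤ 2 := by
    simpa using ENNReal.rpow_le_rpow_of_exponent_le one_le_two (by norm_num : (2⁻¹ : ℝ) ≤ 1)
  calc edist (divisionEqMap L G) (divisionEqMap L H)
      = (4⁻¹ : ℝ≥0) • ((2 : ℝ≥0∞) ^ (2⁻¹ : ℝ) * edist G H) := by
        rw [divisionEqMap, divisionEqMap, edist_smul₀, edist_add_right, edist_dilateLp]
        simp
    _ ≤ (4⁻¹ : ℝ≥0) • (2 * edist G H) := by gcongr
    _ = (2⁻¹ : ℝ≥0) * edist G H := by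
        have h : ((4⁻¹ : ℝ≥0) : ℝ≥0∞) * 2 = (2⁻¹ : ℝ≥0) := by
          rw [← ENNReal.coe_ofNat, ← ENNReal.coe_mul]; norm_num
        rw [ENNReal.smul_def, smul_eq_mul, ← mul_assoc, h]

theorem coeFn_divisionEqMap (L G : Lp ℝ 2 μ₀) :
    divisionEqMap L G =ᵐ[μ₀] fun x => (4 : ℝ)⁻¹ * (G (2⁻¹ * x) + L (2⁻¹ * x)) := by
  set d : Lp ℝ 2 μ₀ → Lp ℝ 2 μ₀ := dilateLp (inv_pos.2 two_pos)
  filter_upwards [Lp.coeFn_smul (4 : ℝ)⁻¹ (d G + d L), Lp.coeFn_add (d G) (d L),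
    coeFn_dilateLp (inv_pos.2 two_pos) G, coeFn_dilateLp (inv_pos.2 two_pos) L] with x h₁ h₂ h₃ h₄
  rw [divisionEqMap, h₁, Pi.smul_apply, h₂, Pi.add_apply, h₃, h₄, smul_eq_mul]

theorem isFixedPt_divisionEqMap_iff {L G : Lp ℝ 2 μ₀} :
    IsFixedPt (divisionEqMap L) G ↔ ∀ᵐ x ∂μ₀, 4 * G (2 * x) - G x = L x := by
  rw [IsFixedPt, Lp.ext_iff, (coeFn_divisionEqMap L G).congr_left]
  refine (ae_comp_const_mul_Ioi_iff two_pos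
    (P := fun x => (4 : ℝ)⁻¹ * (G (2⁻¹ * x) + L (2⁻¹ * x)) = G x)).symm.trans
      (eventually_congr (Eventually.of_forall fun x => ?_))
  simp only [inv_mul_cancel_left₀ (two_ne_zero' ℝ)]
  constructor <;> intro h <;> linarith

theorem ae_divisionEq_congr {G G' L L' : ℝ → ℝ} (hG : G =ᵐ[μ₀] G') (hL : L =ᵐ[μ₀] L') :
    (∀ᵐ x ∂μ₀, 4 * G (2 * x) - G x = L x) ↔ ∀ᵐ x ∂μ₀, 4 * G' (2 * x) - G' x = L' x := by
  refine eventually_congr ?_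
  filter_upwards [hG, hL, (quasiMeasurePreserving_const_mul_Ioi two_pos).ae hG] with x h₁ h₂ h₃
  rw [h₁, h₂, h₃]

theorem exists_unique_memLp_divisionEq {L : ℝ → ℝ} (hL : MemLp L 2 μ₀) :
    ∃ G : ℝ → ℝ, (MemLp G 2 μ₀ ∧ ∀ᵐ x ∂μ₀, 4 * G (2 * x) - G x = L x) ∧
      ∀ G' : ℝ → ℝ, MemLp G' 2 μ₀ → (∀ᵐ x ∂μ₀, 4 * G' (2 * x) - G' x = L x) → G' =ᵐ[μ₀] G := by
  have hT := contractingWith_divisionEqMap (hL.toLp L)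
  set G := hT.fixedPoint (divisionEqMap (hL.toLp L))
  have hsolves {G' : Lp ℝ 2 μ₀} :
      IsFixedPt (divisionEqMap (hL.toLp L)) G' ↔ ∀ᵐ x ∂μ₀, 4 * G' (2 * x) - G' x = L x := by
    rw [isFixedPt_divisionEqMap_iff, ae_divisionEq_congr .rfl hL.coeFn_toLp]
  refine ⟨G, ⟨Lp.memLp G, hsolves.1 hT.fixedPoint_isFixedPt⟩, fun G' hG' hG'L => ?_⟩
  have hfix : IsFixedPt (divisionEqMap (hL.toLp L)) (hG'.toLp G') :=
    hsolves.2 ((ae_divisionEq_congr hG'.coeFn_toLp.symm .rfl).1 hG'L)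
  have hG'G : hG'.toLp G' = G := hT.fixedPoint_unique hfix
  rw [← hG'G]
  exact hG'.coeFn_toLp.symm

end

theorem exists_unique_division_rate_general (N L : ℝ → ℝ)
    (hNpos : ∀ᵐ x ∂(volume.restrict (Ioi (0 : ℝ))), 0 < N x)
    (hL : MemLp L 2 (volume.restrict (Ioi 0))) :
    ∃ B : ℝ → ℝ, (MemLp (fun x => B x * N x) 2 (volume.restrict (Ioi 0)) ∧
      (∀ᵐ x ∂(volume.restrict (Ioi (0 : ℝ))),
        4 * B (2 * x) * N (2 * x) - B x * N x = L x)) ∧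
      ∀ B' : ℝ → ℝ, MemLp (fun x => B' x * N x) 2 (volume.restrict (Ioi 0)) →
        (∀ᵐ x ∂(volume.restrict (Ioi (0 : ℝ))),
          4 * B' (2 * x) * N (2 * x) - B' x * N x = L x) →
        B' =ᵐ[volume.restrict (Ioi (0 : ℝ))] B := by
  obtain ⟨G, ⟨hG, hGL⟩, hG_unique⟩ := exists_unique_memLp_divisionEq hL
  have hBN : (fun x => G x / N x * N x) =ᵐ[volume.restrict (Ioi 0)] G := by
    filter_upwards [hNpos] with x hx using div_mul_cancel₀ _ hx.ne'
  refine ⟨fun x => G x / N x, ⟨(memLp_congr_ae hBN).2 hG, ?_⟩, fun B' hB' hB'L => ?_⟩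
  · simpa only [mul_assoc] using (ae_divisionEq_congr hBN.symm .rfl).1 hGL
  · filter_upwards [hG_unique _ hB' (by simpa only [mul_assoc] using hB'L), hNpos] with x hx hNx
    rw [eq_div_iff hNx.ne', hx]

/-- Given `N ∈ L²(ℝ₊)` with `N > 0` a.e. and `L ∈ L²(ℝ₊)`, there is a unique `B` with
`B·N ∈ L²(ℝ₊)` (i.e. `B ∈ L²(ℝ₊, N² dx)`) solving `4 B(2x) N(2x) − B(x) N(x) = L(x)`
for a.e. `x > 0`; uniqueness holds up to a.e. equality. -/
theorem exists_unique_division_rate (N L : ℝ → ℝ)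
    (hN : MemLp N 2 (volume.restrict (Ioi 0)))
    (hNpos : ∀ᵐ x ∂(volume.restrict (Ioi (0 : ℝ))), 0 < N x)
    (hL : MemLp L 2 (volume.restrict (Ioi 0))) :
    ∃ B : ℝ → ℝ, (MemLp (fun x => B x * N x) 2 (volume.restrict (Ioi 0)) ∧
      (∀ᵐ x ∂(volume.restrict (Ioi (0 : ℝ))),
        4 * B (2 * x) * N (2 * x) - B x * N x = L x)) ∧
      ∀ B' : ℝ → ℝ, MemLp (fun x => B' x * N x) 2 (volume.restrict (Ioi 0)) →
        (∀ᵐ x ∂(volume.restrict (Ioi (0 : ℝ))),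
          4 * B' (2 * x) * N (2 * x) - B' x * N x = L x) →
        B' =ᵐ[volume.restrict (Ioi (0 : ℝ))] B :=
  exists_unique_division_rate_general N L hNpos hL
end

section
/- Let p < 3 and u ∈ L²(ℝ₊, y^p dy). Then 4 ∫₀^∞ u(y)² y^p dy − ∫₀^∞ u(y/2) u(y) y^p dy ≥ (4 − 2^{(p+1)/2}) ∫₀^∞ u(y)² y^p dy, and in particular the bilinear form a(u,v) = 4 ∫₀^∞ u(y) v(y) y^p dy − ∫₀^∞ u(y/2) v(y) y^p dy is coercive on L²(ℝ₊, y^p dy) with coercivity constant 4 − 2^{(p+1)/2} > 0. -/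
/-!
Dilating by `2` multiplies the weighted norm: `∫ u(y/2)² yᵖ dy = 2^(p+1) ∫ u² yᵖ dy`.
Young's inequality `2 c |a b| ≤ a² + c² b²` with `c = 2^((p+1)/2)` then bounds the cross term by
`c ∫ u² yᵖ`, and `c < 4` exactly when `p < 3`.
-/

open MeasureTheory Set

theorem rpow_div_two_add_one_lt_four {p : ℝ} (hp : p < 3) : (2 : ℝ) ^ ((p + 1) / 2) < 4 := by
  calc (2 : ℝ) ^ ((p + 1) / 2) < 2 ^ (2 : ℝ) :=
        Real.rpow_lt_rpow_of_exponent_lt one_lt_two (by linarith)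
    _ = 4 := by norm_num

theorem two_mul_integral_mul_mul_le {α : Type*} [MeasurableSpace α] {μ : Measure α}
    {f g w : α → ℝ} (c : ℝ) (hw : ∀ᵐ x ∂μ, 0 ≤ w x)
    (hf : Integrable (fun x => f x ^ 2 * w x) μ) (hg : Integrable (fun x => g x ^ 2 * w x) μ) :
    2 * c * ∫ x, f x * g x * w x ∂μ ≤
      (∫ x, f x ^ 2 * w x ∂μ) + c ^ 2 * ∫ x, g x ^ 2 * w x ∂μ := by
  have young : ∀ a b : ℝ, |2 * c * (a * b)| ≤ a ^ 2 + c ^ 2 * b ^ 2 := fun a b => by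
    rw [abs_le]
    constructor <;> nlinarith [sq_nonneg (a + c * b), sq_nonneg (a - c * b)]
  have bound : (fun x => |2 * c * (f x * g x * w x)|) ≤ᵐ[μ]
      fun x => f x ^ 2 * w x + c ^ 2 * (g x ^ 2 * w x) := by
    filter_upwards [hw] with x hx
    calc |2 * c * (f x * g x * w x)| = |2 * c * (f x * g x)| * w x := by
          rw [← mul_assoc, abs_mul _ (w x), abs_of_nonneg hx]
      _ ≤ (f x ^ 2 + c ^ 2 * g x ^ 2) * w x := by gcongr; exact young _ _
      _ = f x ^ 2 * w x + c ^ 2 * (g x ^ 2 * w x) := by ring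
  calc 2 * c * ∫ x, f x * g x * w x ∂μ = ∫ x, 2 * c * (f x * g x * w x) ∂μ :=
        (integral_const_mul _ _).symm
    _ ≤ ∫ x, |2 * c * (f x * g x * w x)| ∂μ :=
        (le_abs_self _).trans abs_integral_le_integral_abs
    _ ≤ ∫ x, f x ^ 2 * w x + c ^ 2 * (g x ^ 2 * w x) ∂μ :=
        integral_mono_of_nonneg (.of_forall fun _ => abs_nonneg _) (hf.add (hg.const_mul _)) bound
    _ = _ := by rw [integral_add hf (hg.const_mul _), integral_const_mul]

theorem eqOn_comp_div_mul_rpow (g : ℝ → ℝ) (p : ℝ) {a : ℝ} (ha : 0 < a) :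
    EqOn (fun y => g (y / a) * y ^ p) (fun y => a ^ p * (g (a⁻¹ * y) * (a⁻¹ * y) ^ p))
      (Ioi 0) :=
  fun y hy => by
    dsimp only
    rw [Real.mul_rpow (inv_nonneg.mpr ha.le) (le_of_lt hy), Real.inv_rpow ha.le, inv_mul_eq_div]
    field_simp

theorem integral_comp_div_mul_rpow_Ioi (g : ℝ → ℝ) (p : ℝ) {a : ℝ} (ha : 0 < a) :
    ∫ y in Ioi 0, g (y / a) * y ^ p = a ^ (p + 1) * ∫ y in Ioi 0, g y * y ^ p := by
  rw [setIntegral_congr_fun measurableSet_Ioi (eqOn_comp_div_mul_rpow g p ha), integral_const_mul,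
    integral_comp_mul_left_Ioi (fun y => g y * y ^ p) 0 (inv_pos.mpr ha), mul_zero, inv_inv,
    smul_eq_mul, ← mul_assoc, Real.rpow_add_one ha.ne']

theorem integrableOn_comp_div_mul_rpow_Ioi {g : ℝ → ℝ} {p : ℝ}
    (hg : IntegrableOn (fun y => g y * y ^ p) (Ioi 0)) {a : ℝ} (ha : 0 < a) :
    IntegrableOn (fun y => g (y / a) * y ^ p) (Ioi 0) := by
  refine IntegrableOn.congr_fun ?_ (eqOn_comp_div_mul_rpow g p ha).symm measurableSet_Ioi
  refine Integrable.const_mul ?_ _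
  exact (integrableOn_Ioi_comp_mul_left_iff (fun y => g y * y ^ p) 0 (inv_pos.mpr ha)).mpr
    (by rwa [mul_zero])

theorem coercivity_strategy_one_general (p : ℝ) (hp : p < 3) (u : ℝ → ℝ)
    (hu : IntegrableOn (fun y => (u y) ^ 2 * y ^ p) (Ioi 0)) :
    (0 : ℝ) < 4 - 2 ^ ((p + 1) / 2) ∧
      (4 - 2 ^ ((p + 1) / 2)) * ∫ y in Ioi (0 : ℝ), (u y) ^ 2 * y ^ p ≤
        4 * (∫ y in Ioi (0 : ℝ), (u y) ^ 2 * y ^ p) -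
          ∫ y in Ioi (0 : ℝ), u (y / 2) * u y * y ^ p := by
  set c : ℝ := 2 ^ ((p + 1) / 2)
  set I := ∫ y in Ioi (0 : ℝ), (u y) ^ 2 * y ^ p
  set J := ∫ y in Ioi (0 : ℝ), u (y / 2) * u y * y ^ p
  have hc_sq : c ^ 2 = 2 ^ (p + 1) := by
    rw [← Real.rpow_natCast, ← Real.rpow_mul zero_le_two]; norm_num
  have young : 2 * c * J ≤ c ^ 2 * I + c ^ 2 * I := by
    have := two_mul_integral_mul_mul_le c
      (ae_restrict_of_forall_mem measurableSet_Ioi fun y hy => Real.rpow_nonneg (le_of_lt hy) p)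
      (integrableOn_comp_div_mul_rpow_Ioi hu two_pos) hu
    rwa [integral_comp_div_mul_rpow_Ioi (fun y => u y ^ 2) p two_pos, ← hc_sq] at this
  have cross : J ≤ c * I := le_of_mul_le_mul_left (by linarith) (by positivity : 0 < 2 * c)
  exact ⟨by linarith [rpow_div_two_add_one_lt_four hp], by linarith⟩

/-- Coercivity of the bilinear form `a(u,v) = 4∫u v yᵖ − ∫u(y/2) v(y) yᵖ` on
`L²(ℝ₊, yᵖ dy)` for `p < 3`, with coercivity constant `4 − 2^((p+1)/2) > 0`. -/
theorem coercivity_strategy_one (p : ℝ) (hp : p < 3) (u : ℝ → ℝ)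
    (humeas : AEMeasurable u (volume.restrict (Ioi 0)))
    (hu : IntegrableOn (fun y => (u y) ^ 2 * y ^ p) (Ioi 0)) :
    (0 : ℝ) < 4 - 2 ^ ((p + 1) / 2) ∧
      (4 - 2 ^ ((p + 1) / 2)) * ∫ y in Ioi (0 : ℝ), (u y) ^ 2 * y ^ p ≤
        4 * (∫ y in Ioi (0 : ℝ), (u y) ^ 2 * y ^ p) -
          ∫ y in Ioi (0 : ℝ), u (y / 2) * u y * y ^ p :=
  coercivity_strategy_one_general p hp u hu
end

section
/- Let p > 3 and u ∈ L²(ℝ₊, x^p dx). Then ∫₀^∞ u(x)² x^p dx − 4 ∫₀^∞ u(2x) u(x) x^p dx ≥ (1 − 2^{(3−p)/2}) ∫₀^∞ u(x)² x^p dx, and in particular the bilinear form b(u,v) = −4 ∫₀^∞ u(2x) v(x) x^p dx + ∫₀^∞ u(x) v(x) x^p dx is coercive on L²(ℝ₊, x^p dx) with coercivity constant 1 − 2^{(3−p)/2} > 0. -/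
open MeasureTheory Set

/-!
The dilation `u ↦ u (2 ·)` multiplies the norm of `L²(ℝ₊, xᵖ dx)` by `s = 2^(-(p+1)/2)`, so
Young's inequality `2|ab| ≤ a²/s + s b²`, integrated against `xᵖ`, bounds the cross term
`|∫ u(2x) u(x) xᵖ dx|` by `s ∫ u² xᵖ dx`. Since `4s = 2^((3-p)/2) < 1` for `p > 3`, the form is
coercive.
-/

lemma two_mul_abs_mul_le {s : ℝ} (hs : 0 < s) (a b : ℝ) :
    2 * |a * b| ≤ s⁻¹ * a ^ 2 + s * b ^ 2 := by
  rw [abs_mul, ← sq_abs a, ← sq_abs b]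
  have key : s⁻¹ * |a| ^ 2 + s * |b| ^ 2 - 2 * (|a| * |b|) = s⁻¹ * (|a| - s * |b|) ^ 2 := by
    field_simp
    ring
  linarith [mul_nonneg (inv_nonneg.2 hs.le) (sq_nonneg (|a| - s * |b|))]

lemma abs_integral_mul_mul_le {α : Type*} [MeasurableSpace α] {μ : Measure α} {f g w : α → ℝ}
    (hw : ∀ᵐ x ∂μ, 0 ≤ w x) (hf : Integrable (fun x => f x ^ 2 * w x) μ)
    (hg : Integrable (fun x => g x ^ 2 * w x) μ) {s : ℝ} (hs : 0 < s) :
    |∫ x, f x * g x * w x ∂μ| ≤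
      (s⁻¹ * ∫ x, f x ^ 2 * w x ∂μ + s * ∫ x, g x ^ 2 * w x ∂μ) / 2 := by
  have hbound : ∀ᵐ x ∂μ,
      ‖f x * g x * w x‖ ≤ (s⁻¹ * (f x ^ 2 * w x) + s * (g x ^ 2 * w x)) / 2 := by
    filter_upwards [hw] with x hx
    rw [Real.norm_eq_abs, abs_mul, abs_of_nonneg hx]
    nlinarith [mul_le_mul_of_nonneg_right (two_mul_abs_mul_le hs (f x) (g x)) hx]
  calc |∫ x, f x * g x * w x ∂μ|
      ≤ ∫ x, (s⁻¹ * (f x ^ 2 * w x) + s * (g x ^ 2 * w x)) / 2 ∂μ :=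
        norm_integral_le_of_norm_le (((hf.const_mul _).add (hg.const_mul _)).div_const 2) hbound
    _ = _ := by
        rw [integral_div, integral_add (hf.const_mul _) (hg.const_mul _), integral_const_mul,
          integral_const_mul]

lemma comp_mul_left_mul_rpow_eq (f : ℝ → ℝ) {a : ℝ} (ha : 0 < a) (p : ℝ) {x : ℝ} (hx : 0 < x) :
    f (a * x) * x ^ p = a ^ (-p) * (f (a * x) * (a * x) ^ p) := by
  rw [Real.mul_rpow ha.le hx.le, Real.rpow_neg ha.le]
  field_simp

lemma integrableOn_Ioi_comp_mul_left_mul_rpow {f : ℝ → ℝ} {p : ℝ}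
    (hf : IntegrableOn (fun x => f x * x ^ p) (Ioi 0)) {a : ℝ} (ha : 0 < a) :
    IntegrableOn (fun x => f (a * x) * x ^ p) (Ioi 0) := by
  have hcomp : IntegrableOn (fun x => f (a * x) * (a * x) ^ p) (Ioi 0) :=
    (integrableOn_Ioi_comp_mul_left_iff (fun y => f y * y ^ p) 0 ha).2 (by simpa using hf)
  refine IntegrableOn.congr_fun (hcomp.const_mul (a ^ (-p))) (fun x hx => ?_) measurableSet_Ioi
  exact (comp_mul_left_mul_rpow_eq f ha p hx).symm

lemma setIntegral_Ioi_comp_mul_left_mul_rpow (f : ℝ → ℝ) {a : ℝ} (ha : 0 < a) (p : ℝ) :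
    ∫ x in Ioi 0, f (a * x) * x ^ p = a ^ (-(p + 1)) * ∫ x in Ioi 0, f x * x ^ p := by
  calc ∫ x in Ioi 0, f (a * x) * x ^ p
      = ∫ x in Ioi 0, a ^ (-p) * (f (a * x) * (a * x) ^ p) :=
        setIntegral_congr_fun measurableSet_Ioi fun x hx => comp_mul_left_mul_rpow_eq f ha p hx
    _ = a ^ (-p) * (a⁻¹ * ∫ x in Ioi 0, f x * x ^ p) := by
        rw [integral_const_mul, integral_comp_mul_left_Ioi (fun y => f y * y ^ p) 0 ha, mul_zero,
          smul_eq_mul]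
    _ = a ^ (-(p + 1)) * ∫ x in Ioi 0, f x * x ^ p := by
        rw [neg_add, Real.rpow_add ha, Real.rpow_neg_one, mul_assoc]

theorem coercivity_strategy_two_general (p : ℝ) (hp : 3 < p) (u : ℝ → ℝ)
    (hu : IntegrableOn (fun x => (u x) ^ 2 * x ^ p) (Ioi 0)) :
    (0 : ℝ) < 1 - 2 ^ ((3 - p) / 2) ∧
      (1 - 2 ^ ((3 - p) / 2)) * ∫ x in Ioi (0 : ℝ), (u x) ^ 2 * x ^ p ≤
        (∫ x in Ioi (0 : ℝ), (u x) ^ 2 * x ^ p) -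
          4 * ∫ x in Ioi (0 : ℝ), u (2 * x) * u x * x ^ p := by
  refine ⟨sub_pos.2 (Real.rpow_lt_one_of_one_lt_of_neg one_lt_two (by linarith)), ?_⟩
  have hfour : 4 * (2 : ℝ) ^ (-(p + 1) / 2) = 2 ^ ((3 - p) / 2) := by
    rw [show (3 - p) / 2 = 2 + -(p + 1) / 2 by ring, Real.rpow_add two_pos, Real.rpow_two]
    norm_num
  set I := ∫ x in Ioi (0 : ℝ), (u x) ^ 2 * x ^ p
  set s : ℝ := 2 ^ (-(p + 1) / 2)
  have hs : 0 < s := by positivity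
  have hs_sq : s ^ 2 = 2 ^ (-(p + 1)) := by
    rw [← Real.rpow_natCast, ← Real.rpow_mul zero_le_two]
    norm_num
  have hscaled : ∫ x in Ioi (0 : ℝ), u (2 * x) ^ 2 * x ^ p = s ^ 2 * I := by
    rw [hs_sq]
    exact setIntegral_Ioi_comp_mul_left_mul_rpow (fun y => u y ^ 2) two_pos p
  have hcross : |∫ x in Ioi (0 : ℝ), u (2 * x) * u x * x ^ p| ≤ s * I := by
    have hweight : ∀ᵐ x ∂volume.restrict (Ioi (0 : ℝ)), 0 ≤ x ^ p :=
      ae_restrict_of_forall_mem measurableSet_Ioi fun x (hx : 0 < x) => Real.rpow_nonneg hx.le p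
    have h := abs_integral_mul_mul_le hweight
      (integrableOn_Ioi_comp_mul_left_mul_rpow hu two_pos) hu hs
    rwa [hscaled, ← mul_assoc, sq, inv_mul_cancel_left₀ hs.ne', ← two_mul,
      mul_div_cancel_left₀ _ two_ne_zero] at h
  have hbound : 4 * (s * I) = 2 ^ ((3 - p) / 2) * I := by rw [← hfour, mul_assoc]
  linarith [le_abs_self (∫ x in Ioi (0 : ℝ), u (2 * x) * u x * x ^ p)]

/-- Coercivity of the bilinear form `b(u,v) = −4∫u(2x) v(x) xᵖ + ∫u v xᵖ` on
`L²(ℝ₊, xᵖ dx)` for `p > 3`, with coercivity constant `1 − 2^((3−p)/2) > 0`. -/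
theorem coercivity_strategy_two (p : ℝ) (hp : 3 < p) (u : ℝ → ℝ)
    (humeas : AEMeasurable u (volume.restrict (Ioi 0)))
    (hu : IntegrableOn (fun x => (u x) ^ 2 * x ^ p) (Ioi 0)) :
    (0 : ℝ) < 1 - 2 ^ ((3 - p) / 2) ∧
      (1 - 2 ^ ((3 - p) / 2)) * ∫ x in Ioi (0 : ℝ), (u x) ^ 2 * x ^ p ≤
        (∫ x in Ioi (0 : ℝ), (u x) ^ 2 * x ^ p) -
          4 * ∫ x in Ioi (0 : ℝ), u (2 * x) * u x * x ^ p :=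
  coercivity_strategy_two_general p hp u hu
end

section
/- Let L ∈ L²(ℝ₊, dx) ∩ L²(ℝ₊, x⁴ dx) and suppose there exists H ∈ L²(ℝ₊, dx) ∩ L²(ℝ₊, x⁴ dx) with 4 H(2x) − H(x) = L(x) for a.e. x > 0. Then H⁽¹⁾ = H⁽²⁾ almost everywhere on (0,∞), i.e., Σ_{n=1}^∞ 2^{-2n} L(2^{-n} x) = −Σ_{n=0}^∞ 2^{2n} L(2^n x) for a.e. x > 0; equivalently, the two-sided sum Σ_{n∈ℤ} 2^{2n} L(2^n x) vanishes for a.e. x > 0. -/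
open MeasureTheory Set ENNReal

/-!
Telescoping `4 H(2y) - H(y) = L(y)` along `y = 2⁻ⁿ x` and `y = 2ⁿ x` shows that the two series
sum to `H x` and `-H x`, provided `4⁻ⁿ H(2⁻ⁿ x)` and `4ⁿ H(2ⁿ x)` are absolutely summable in `n`.
Dilation scales the relevant weighted `L²` norms geometrically: the `n`-th term has squared norm
`8⁻ⁿ ‖H‖²` in `L²(dx)` and `2⁻ⁿ ‖H‖²` in `L²(x⁴ dx)`. Hence for some `r < 1` the sum over `n` of
`r⁻ⁿ` times the squared terms is integrable, so finite a.e., and `|y| ≤ (s + y² / s) / 2` with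
`s` of size `rⁿ` turns this into absolute summability.
-/

theorem abs_le_add_sq_div_div_two {s : ℝ} (hs : 0 < s) (y : ℝ) : |y| ≤ (s + y ^ 2 / s) / 2 := by
  rw [le_div_iff₀ two_pos, add_div' _ _ _ hs.ne', le_div_iff₀ hs, ← sq_abs y]
  nlinarith [two_mul_le_add_sq |y| s]

theorem Summable.hasSum_sub_succ {G : Type*} [AddCommGroup G] [TopologicalSpace G]
    [IsTopologicalAddGroup G] {d : ℕ → G} (hd : Summable d) :
    HasSum (fun n => d n - d (n + 1)) (d 0) := by
  simpa using hd.hasSum.sub ((hasSum_nat_add_iff' 1).2 hd.hasSum)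

theorem ae_tsum_ne_top_of_tsum_lintegral_ne_top {α : Type*} [MeasurableSpace α] {μ : Measure α}
    {g : ℕ → α → ℝ≥0∞} (hg : ∀ n, AEMeasurable (g n) μ) (h : ∑' n, ∫⁻ x, g n x ∂μ ≠ ∞) :
    ∀ᵐ x ∂μ, ∑' n, g n x ≠ ∞ :=
  (ae_lt_top' (AEMeasurable.tsum hg) (by rwa [lintegral_tsum hg])).mono fun _ hx => hx.ne

theorem map_const_mul_volume_restrict_Ioi_zero {c : ℝ} (hc : 0 < c) :
    (volume.restrict (Ioi 0)).map (c * ·) = ENNReal.ofReal c⁻¹ • volume.restrict (Ioi 0) := by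
  have h := Measure.restrict_map (μ := volume) (measurable_const_mul c) (measurableSet_Ioi (a := 0))
  rw [preimage_const_mul_Ioi₀ _ hc, zero_div] at h
  rw [← h, Real.map_volume_mul_left hc.ne', Measure.restrict_smul, abs_of_pos (inv_pos.2 hc)]

theorem quasiMeasurePreserving_const_mul_Ioi_zero {c : ℝ} (hc : 0 < c) :
    Measure.QuasiMeasurePreserving (c * ·) (volume.restrict (Ioi 0)) (volume.restrict (Ioi 0)) :=
  ⟨measurable_const_mul c, by
    rw [map_const_mul_volume_restrict_Ioi_zero hc]; exact Measure.smul_absolutelyContinuous⟩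

theorem setLIntegral_Ioi_zero_comp_const_mul (g : ℝ → ℝ≥0∞) {c : ℝ} (hc : 0 < c) :
    ∫⁻ x in Ioi 0, g (c * x) = ENNReal.ofReal c⁻¹ * ∫⁻ x in Ioi 0, g x := by
  rw [← (measurableEmbedding_mulLeft₀ hc.ne').lintegral_map,
    map_const_mul_volume_restrict_Ioi_zero hc, lintegral_smul_measure, smul_eq_mul]

theorem setLIntegral_Ioi_zero_sq_mul_pow_comp_const_mul (f : ℝ → ℝ) (k : ℕ) (a : ℝ) {c : ℝ}
    (hc : 0 < c) :
    ∫⁻ x in Ioi 0, ENNReal.ofReal ((a * f (c * x)) ^ 2 * x ^ k)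
      = ENNReal.ofReal (a ^ 2 / c ^ (k + 1)) * ∫⁻ x in Ioi 0, ENNReal.ofReal (f x ^ 2 * x ^ k) := by
  have h : ∀ x, ENNReal.ofReal ((a * f (c * x)) ^ 2 * x ^ k)
      = ENNReal.ofReal (a ^ 2 / c ^ k) * ENNReal.ofReal (f (c * x) ^ 2 * (c * x) ^ k) := by
    intro x
    rw [← ENNReal.ofReal_mul (by positivity)]
    congr 1
    field_simp
    ring
  simp_rw [h]
  rw [lintegral_const_mul' _ _ ofReal_ne_top,
    setLIntegral_Ioi_zero_comp_const_mul (fun y => ENNReal.ofReal (f y ^ 2 * y ^ k)) hc,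
    ← mul_assoc, ← ENNReal.ofReal_mul (by positivity), pow_succ c, div_mul_eq_div_div,
    div_eq_mul_inv _ c]

theorem ae_summable_pow_mul_comp_pow_mul (f : ℝ → ℝ) (k : ℕ)
    (hfm : AEMeasurable f (volume.restrict (Ioi 0)))
    (hf : IntegrableOn (fun x => f x ^ 2 * x ^ k) (Ioi 0)) {a c : ℝ} (hc : 0 < c)
    (hac : a ^ 2 < c ^ (k + 1)) :
    ∀ᵐ x ∂volume.restrict (Ioi 0), Summable fun n : ℕ => a ^ n * f (c ^ n * x) := by
  set q := a ^ 2 / c ^ (k + 1)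
  have hq : q < 1 := (div_lt_one (by positivity)).2 hac
  obtain ⟨r, hqr, hr1⟩ := exists_between hq
  have hr : 0 < r := (by positivity : 0 ≤ q).trans_lt hqr
  set g : ℕ → ℝ → ℝ≥0∞ := fun n x =>
    ENNReal.ofReal (r⁻¹ ^ n * ((a ^ n * f (c ^ n * x)) ^ 2 * x ^ k))
  have hg_meas (n : ℕ) : AEMeasurable (g n) (volume.restrict (Ioi 0)) :=
    (hfm.comp_quasiMeasurePreserving (quasiMeasurePreserving_const_mul_Ioi_zero (pow_pos hc n))
      |>.const_mul _ |>.pow_const 2 |>.mul (aemeasurable_id.pow_const k) |>.const_mul _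
      |>.ennreal_ofReal)
  have hg_int (n : ℕ) : ∫⁻ x in Ioi 0, g n x
      = ENNReal.ofReal (q / r) ^ n * ∫⁻ x in Ioi 0, ENNReal.ofReal (f x ^ 2 * x ^ k) := by
    simp only [g, ENNReal.ofReal_mul (by positivity : (0 : ℝ) ≤ r⁻¹ ^ n)]
    rw [lintegral_const_mul' _ _ ofReal_ne_top,
      setLIntegral_Ioi_zero_sq_mul_pow_comp_const_mul f k _ (pow_pos hc n), ← mul_assoc,
      ← ENNReal.ofReal_mul (by positivity), ← ENNReal.ofReal_pow (by positivity)]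
    simp only [q, div_pow, ← pow_mul, inv_pow]
    ring_nf
  have hg_sum : ∑' n, ∫⁻ x in Ioi 0, g n x ≠ ∞ := by
    simp only [hg_int, ENNReal.tsum_mul_right]
    refine mul_ne_top (tsum_geometric_lt_top.2 ?_).ne
      (lt_of_le_of_lt (lintegral_mono fun x => Real.ofReal_le_enorm _) hf.2).ne
    exact ofReal_lt_one.2 ((div_lt_one hr).2 hqr)
  filter_upwards [ae_tsum_ne_top_of_tsum_lintegral_ne_top hg_meas hg_sum,
    ae_restrict_mem measurableSet_Ioi] with x hx (hx0 : 0 < x)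
  have hsq : Summable fun n : ℕ => r⁻¹ ^ n * ((a ^ n * f (c ^ n * x)) ^ 2 * x ^ k) :=
    (ENNReal.summable_toReal hx).congr fun n => ENNReal.toReal_ofReal (by positivity)
  refine .of_norm_bounded
    ((((summable_geometric_of_lt_one hr.le hr1).div_const (x ^ k)).add hsq).div_const 2)
    fun n => (Real.norm_eq_abs _).trans_le ?_
  have hxk : 0 < x ^ k := pow_pos hx0 k
  convert abs_le_add_sq_div_div_two (by positivity : 0 < r ^ n / x ^ k) (a ^ n * f (c ^ n * x))
    using 3
  rw [inv_pow]
  field_simp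

theorem Hone_eq_Htwo_general (L H : ℝ → ℝ)
    (hH0 : MemLp H 2 (volume.restrict (Ioi 0)))
    (hH4 : IntegrableOn (fun x => (H x) ^ 2 * x ^ 4) (Ioi 0))
    (heq : ∀ᵐ x ∂(volume.restrict (Ioi (0 : ℝ))), 4 * H (2 * x) - H x = L x) :
    ∀ᵐ x ∂(volume.restrict (Ioi (0 : ℝ))),
      (∑' n : ℕ, (2 : ℝ) ^ (-(2 : ℝ) * ((n : ℝ) + 1)) * L ((2 : ℝ) ^ (-((n : ℝ) + 1)) * x))
        = -∑' n : ℕ, (2 : ℝ) ^ (2 * n) * L ((2 : ℝ) ^ n * x) := by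
  have hHm := hH0.aestronglyMeasurable.aemeasurable
  have hdown := ae_summable_pow_mul_comp_pow_mul H 0 hHm
    (by simp only [pow_zero, mul_one]; exact hH0.integrable_sq) (a := 4⁻¹) (c := 2⁻¹)
    (by norm_num) (by norm_num)
  have hup := ae_summable_pow_mul_comp_pow_mul H 4 hHm hH4 (a := 4) (c := 2)
    (by norm_num) (by norm_num)
  have hrel : ∀ᵐ x ∂volume.restrict (Ioi 0), ∀ n : ℕ,
      4 * H (2 * (2⁻¹ ^ (n + 1) * x)) - H (2⁻¹ ^ (n + 1) * x) = L (2⁻¹ ^ (n + 1) * x) ∧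
      4 * H (2 * (2 ^ n * x)) - H (2 ^ n * x) = L (2 ^ n * x) :=
    ae_all_iff.2 fun n =>
      ((quasiMeasurePreserving_const_mul_Ioi_zero (by positivity)).ae heq).and
        ((quasiMeasurePreserving_const_mul_Ioi_zero (by positivity)).ae heq)
  filter_upwards [hdown, hup, hrel] with x hd hu hr
  have hleft (n : ℕ) :
      (2 : ℝ) ^ (-(2 : ℝ) * ((n : ℝ) + 1)) * L ((2 : ℝ) ^ (-((n : ℝ) + 1)) * x)
        = 4⁻¹ ^ n * H (2⁻¹ ^ n * x) - 4⁻¹ ^ (n + 1) * H (2⁻¹ ^ (n + 1) * x) := by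
    rw [← Nat.cast_add_one, ← neg_one_mul ((n + 1 : ℕ) : ℝ), Real.rpow_mul_natCast zero_le_two,
      Real.rpow_mul_natCast zero_le_two, Real.rpow_neg_one, Real.rpow_neg zero_le_two,
      Real.rpow_two, ← (hr n).1, show 2 * ((2⁻¹ : ℝ) ^ (n + 1) * x) = 2⁻¹ ^ n * x by ring]
    ring
  have hright (n : ℕ) : (2 : ℝ) ^ (2 * n) * L ((2 : ℝ) ^ n * x)
      = -(4 ^ n * H (2 ^ n * x) - 4 ^ (n + 1) * H (2 ^ (n + 1) * x)) := by
    rw [← (hr n).2, pow_mul, show 2 * (2 ^ n * x) = (2 : ℝ) ^ (n + 1) * x by ring]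
    ring
  simp only [hleft, hright, tsum_neg, hd.hasSum_sub_succ.tsum_eq, hu.hasSum_sub_succ.tsum_eq]
  simp

/-- If `L ∈ L²(ℝ₊, dx) ∩ L²(ℝ₊, x⁴ dx)` and the dilation equation `4 H(2x) − H(x) = L(x)`
has a solution `H` in `L²(ℝ₊, dx) ∩ L²(ℝ₊, x⁴ dx)`, then the two series solutions
coincide: `Σ_{n=1}^∞ 2^{−2n} L(2^{−n} x) = −Σ_{n=0}^∞ 2^{2n} L(2^n x)` for a.e. `x > 0`;
equivalently the two-sided sum `Σ_{n∈ℤ} 2^{2n} L(2^n x)` vanishes a.e. -/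
theorem Hone_eq_Htwo (L H : ℝ → ℝ)
    (hL0 : MemLp L 2 (volume.restrict (Ioi 0)))
    (hL4 : IntegrableOn (fun x => (L x) ^ 2 * x ^ 4) (Ioi 0))
    (hH0 : MemLp H 2 (volume.restrict (Ioi 0)))
    (hH4 : IntegrableOn (fun x => (H x) ^ 2 * x ^ 4) (Ioi 0))
    (heq : ∀ᵐ x ∂(volume.restrict (Ioi (0 : ℝ))), 4 * H (2 * x) - H x = L x) :
    ∀ᵐ x ∂(volume.restrict (Ioi (0 : ℝ))),
      (∑' n : ℕ, (2 : ℝ) ^ (-(2 : ℝ) * ((n : ℝ) + 1)) * L ((2 : ℝ) ^ (-((n : ℝ) + 1)) * x))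
        = -∑' n : ℕ, (2 : ℝ) ^ (2 * n) * L ((2 : ℝ) ^ n * x) :=
  Hone_eq_Htwo_general L H hH0 hH4 heq
end

section
/- Let B : (0,∞) → ℝ be measurable and nonnegative, λ₀ ∈ ℝ, and let N : [0,∞) → ℝ be continuously differentiable with N(0) = 0, such that N, x N, x N' and x B(x) N(x) are integrable on (0,∞), x N(x) → 0 as x → ∞, ∫₀^∞ N(x) dx > 0, and N'(x) + (λ₀ + B(x)) N(x) = 4 B(2x) N(2x) for all x > 0. Then λ₀ = (∫₀^∞ N(x) dx) / (∫₀^∞ x N(x) dx). -/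
open MeasureTheory Set Filter

/-! Multiply the equation by `x` and integrate over `(0, ∞)`. Integrating by parts,
`∫ x N' = -∫ N` (the boundary term `x N(x)` vanishes at `0` and at `∞`), while the
substitution `y = 2x` turns the fragmentation term `∫ 4 x B(2x) N(2x)` into `∫ y B(y) N(y)`,
which cancels the loss term. What remains is `λ₀ ∫ x N = ∫ N`. -/

theorem integral_Ioi_mul_deriv_eq {f f' : ℝ → ℝ} {a : ℝ}
    (hfa : ContinuousWithinAt f (Ici a) a)
    (hderiv : ∀ x ∈ Ioi a, HasDerivAt f (f' x) x)
    (hf : IntegrableOn f (Ioi a)) (hxf' : IntegrableOn (fun x => x * f' x) (Ioi a))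
    (hlim : Tendsto (fun x => x * f x) atTop (nhds 0)) :
    ∫ x in Ioi a, x * f' x = -(a * f a) - ∫ x in Ioi a, f x := by
  have hprod : ∀ x ∈ Ioi a, HasDerivAt (fun y => y * f y) (f x + x * f' x) x := fun x hx =>
    ((hasDerivAt_id' x).mul (hderiv x hx)).congr_deriv (by ring)
  have hparts : ∫ x in Ioi a, (f x + x * f' x) = 0 - a * f a :=
    integral_Ioi_of_hasDerivAt_of_tendsto (continuousWithinAt_id.mul hfa) hprod
      (hf.add hxf') hlim
  rw [integral_add hf hxf'] at hparts
  linarith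

theorem integral_Ioi_mul_four_mul_comp_two_mul (h : ℝ → ℝ) :
    ∫ x in Ioi (0 : ℝ), x * (4 * h (2 * x)) = ∫ y in Ioi (0 : ℝ), y * h y := by
  have hsubst := integral_comp_mul_left_Ioi (fun y => y * h y) 0 two_pos
  simp only [mul_zero, smul_eq_mul] at hsubst
  calc ∫ x in Ioi (0 : ℝ), x * (4 * h (2 * x))
      = ∫ x in Ioi (0 : ℝ), 2 * (2 * x * h (2 * x)) :=
        integral_congr_ae (ae_of_all _ fun x => by ring)
    _ = ∫ y in Ioi (0 : ℝ), y * h y := by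
        rw [integral_const_mul, hsubst]; ring

theorem malthus_parameter_formula_general (B : ℝ → ℝ)
    (lam0 : ℝ) (N N' : ℝ → ℝ)
    (hNderiv : ∀ x ∈ Ici (0 : ℝ), HasDerivWithinAt N (N' x) (Ici 0) x)
    (hNint : IntegrableOn N (Ioi 0))
    (hxNint : IntegrableOn (fun x => x * N x) (Ioi 0))
    (hxN'int : IntegrableOn (fun x => x * N' x) (Ioi 0))
    (hxBNint : IntegrableOn (fun x => x * (B x * N x)) (Ioi 0))
    (hNlim : Tendsto (fun x => x * N x) atTop (nhds 0))
    (hNpos : 0 < ∫ x in Ioi (0 : ℝ), N x)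
    (heq : ∀ x : ℝ, 0 < x →
      N' x + (lam0 + B x) * N x = 4 * B (2 * x) * N (2 * x)) :
    lam0 = (∫ x in Ioi (0 : ℝ), N x) / ∫ x in Ioi (0 : ℝ), x * N x := by
  have hparts : ∫ x in Ioi (0 : ℝ), x * N' x = -∫ x in Ioi (0 : ℝ), N x := by
    rw [integral_Ioi_mul_deriv_eq (hNderiv 0 self_mem_Ici).continuousWithinAt
      (fun x hx => (hNderiv x (mem_Ici.mpr hx.le)).hasDerivAt (Ici_mem_nhds hx))
      hNint hxN'int hNlim]
    ring
  have hmoment : ∫ x in Ioi (0 : ℝ), (x * N' x + lam0 * (x * N x) + x * (B x * N x))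
      = ∫ x in Ioi (0 : ℝ), x * (B x * N x) := by
    rw [← integral_Ioi_mul_four_mul_comp_two_mul (fun y => B y * N y)]
    refine setIntegral_congr_fun measurableSet_Ioi fun x hx => ?_
    linear_combination x * heq x hx
  have hlamxN : IntegrableOn (fun x => lam0 * (x * N x)) (Ioi 0) := hxNint.const_mul lam0
  have hlinear : IntegrableOn (fun x => x * N' x + lam0 * (x * N x)) (Ioi 0) :=
    hxN'int.add hlamxN
  rw [integral_add hlinear hxBNint, integral_add hxN'int hlamxN, integral_const_mul,
    hparts] at hmoment
  have hJ : (∫ x in Ioi (0 : ℝ), x * N x) ≠ 0 := by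
    intro hJ0
    rw [hJ0] at hmoment
    linarith
  rw [eq_div_iff hJ]
  linarith

/-- The Malthus parameter of the cell-division eigenvalue problem satisfies
`λ₀ = (∫₀^∞ N)/(∫₀^∞ x N)`. -/
theorem malthus_parameter_formula (B : ℝ → ℝ)
    (hBmeas : AEMeasurable B (volume.restrict (Ioi 0)))
    (hBnonneg : ∀ x : ℝ, 0 < x → 0 ≤ B x)
    (lam0 : ℝ) (N N' : ℝ → ℝ)
    (hNderiv : ∀ x ∈ Ici (0 : ℝ), HasDerivWithinAt N (N' x) (Ici 0) x)
    (hN'cont : ContinuousOn N' (Ici 0))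
    (hN0 : N 0 = 0)
    (hNint : IntegrableOn N (Ioi 0))
    (hxNint : IntegrableOn (fun x => x * N x) (Ioi 0))
    (hxN'int : IntegrableOn (fun x => x * N' x) (Ioi 0))
    (hxBNint : IntegrableOn (fun x => x * (B x * N x)) (Ioi 0))
    (hNlim : Tendsto (fun x => x * N x) atTop (nhds 0))
    (hNpos : 0 < ∫ x in Ioi (0 : ℝ), N x)
    (heq : ∀ x : ℝ, 0 < x →
      N' x + (lam0 + B x) * N x = 4 * B (2 * x) * N (2 * x)) :
    lam0 = (∫ x in Ioi (0 : ℝ), N x) / ∫ x in Ioi (0 : ℝ), x * N x :=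
  malthus_parameter_formula_general B lam0 N N' hNderiv hNint hxNint hxN'int hxBNint hNlim hNpos heq
end
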